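/- arXiv:2304.10347 — 7 statements merged into one kernel-verified Lean document; each statement's English description precedes it below -/
import Mathlib

section
/- For any block matrix H and any n ≥ 1, the S-S block of H^n also satisfies the 'left' recurrence (H^n)_SS = H_SS · (H^{n−1})_SS + Σ_{m=0}^{n−2} H_SS̄ · (H_S̄S̄)^{n−m−2} · H_S̄S · (H^m)_SS. -/
open Matrix

lemma mul_toBlocks₁₂ {p q : ℕ} (A : Matrix (Fin p) (Fin p) ℂ) (B : Matrix (Fin p) (Fin q) ℂ)
    (C : Matrix (Fin q) (Fin p) ℂ) (D : Matrix (Fin q) (Fin q) ℂ)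
    (M : Matrix (Fin p ⊕ Fin q) (Fin p ⊕ Fin q) ℂ) :
    (Matrix.fromBlocks A B C D * M).toBlocks₁₂
      = A * M.toBlocks₁₂ + B * M.toBlocks₂₂ := by
  conv_lhs => rw [← Matrix.fromBlocks_toBlocks M, Matrix.fromBlocks_multiply]
  rfl

lemma mul_toBlocks₂₂ {p q : ℕ} (A : Matrix (Fin p) (Fin p) ℂ) (B : Matrix (Fin p) (Fin q) ℂ)
    (C : Matrix (Fin q) (Fin p) ℂ) (D : Matrix (Fin q) (Fin q) ℂ)
    (M : Matrix (Fin p ⊕ Fin q) (Fin p ⊕ Fin q) ℂ) :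
    (Matrix.fromBlocks A B C D * M).toBlocks₂₂
      = C * M.toBlocks₁₂ + D * M.toBlocks₂₂ := by
  conv_lhs => rw [← Matrix.fromBlocks_toBlocks M, Matrix.fromBlocks_multiply]
  rfl

lemma pow_toBlocks₁₂ {p q : ℕ} (A : Matrix (Fin p) (Fin p) ℂ) (B : Matrix (Fin p) (Fin q) ℂ)
    (C : Matrix (Fin q) (Fin p) ℂ) (D : Matrix (Fin q) (Fin q) ℂ) (k : ℕ) :
    ((Matrix.fromBlocks A B C D) ^ k).toBlocks₁₂
      = ∑ m ∈ Finset.range k,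
          A ^ (k - 1 - m) * B * ((Matrix.fromBlocks A B C D) ^ m).toBlocks₂₂ := by
  induction k with
  | zero => simp [Matrix.toBlocks₁₂]; rfl
  | succ k ih =>
    rw [pow_succ', mul_toBlocks₁₂, ih, Finset.sum_range_succ, Matrix.mul_sum]
    congr 1
    · refine Finset.sum_congr rfl fun m hm => ?_
      rw [Finset.mem_range] at hm
      rw [show k + 1 - 1 - m = (k - 1 - m) + 1 from by omega, pow_succ', Matrix.mul_assoc]
      simp only [Matrix.mul_assoc]
    · simp

/-- Left recurrence for the S-S block of powers of a block matrix. -/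
theorem blocks22_pow_recurrence_left (p q : ℕ) (n : ℕ) (hn : 1 ≤ n)
    (A : Matrix (Fin p) (Fin p) ℂ) (B : Matrix (Fin p) (Fin q) ℂ)
    (C : Matrix (Fin q) (Fin p) ℂ) (D : Matrix (Fin q) (Fin q) ℂ) :
    ((Matrix.fromBlocks A B C D) ^ n).toBlocks₂₂
      = D * ((Matrix.fromBlocks A B C D) ^ (n - 1)).toBlocks₂₂
        + ∑ m ∈ Finset.range (n - 1),
            C * A ^ (n - m - 2) * B * ((Matrix.fromBlocks A B C D) ^ m).toBlocks₂₂ := by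
  obtain ⟨k, rfl⟩ := Nat.exists_eq_add_of_le hn
  rw [Nat.add_comm 1 k, Nat.add_sub_cancel, pow_succ' _ k, mul_toBlocks₂₂, pow_toBlocks₁₂,
    Matrix.mul_sum, add_comm]
  congr 1
  refine Finset.sum_congr rfl fun m hm => ?_
  rw [Finset.mem_range] at hm
  rw [show k + 1 - m - 2 = k - 1 - m from by omega, Matrix.mul_assoc]
  simp only [Matrix.mul_assoc]
end

section
/- Let H be a block matrix and L an invertible q×q matrix. If L R_S(H,ω) L⁻¹ = R_S(H,ω*)† holds for all ω in some nonempty open subset of ℂ outside the spectrum of H_S̄S̄ (equivalently, for all ω with |ω| sufficiently large), then L H_SS L⁻¹ = H_SS† and L [H_SS̄ (H_S̄S̄)^n H_S̄S] L⁻¹ = [H_SS̄ (H_S̄S̄)^n H_S̄S]† for all n ≥ 0. -/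
/-!
For `|ω|` large, `A - ω` is invertible and `(A - ω)⁻¹ → 0`. Put
`Fₙ(ω) = L C Aⁿ (A - ω)⁻¹ B L⁻¹ - (C Aⁿ (A - ω̄)⁻¹ B)ᴴ` and `Mₙ = L C Aⁿ B L⁻¹ - (C Aⁿ B)ᴴ`.
The hypothesis says `F₀(ω) = L D L⁻¹ - Dᴴ`, and `A (A - ω)⁻¹ = 1 + ω (A - ω)⁻¹` gives
`Fₙ₊₁(ω) = Mₙ + ω Fₙ(ω)`. Every `Fₙ` tends to `0` at infinity, so `L D L⁻¹ - Dᴴ = 0`, hence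
`F₀ = 0` near infinity, hence `F₁ = M₀` there, so `M₀ = 0`, and so on: this is the comparison of
the coefficients of the expansion of `R_S(H, ω)` in powers of `ω⁻¹`.
-/

open Matrix Filter Topology Bornology

lemma Ring.inverse_neg {R : Type*} [MonoidWithZero R] [HasDistribNeg R] (x : R) :
    Ring.inverse (-x) = -Ring.inverse x := by
  by_cases hx : IsUnit x
  · obtain ⟨u, rfl⟩ := hx
    rw [← Units.val_neg, Ring.inverse_unit, Ring.inverse_unit, inv_neg, Units.val_neg]
  · rw [Ring.inverse_non_unit x hx, Ring.inverse_non_unit _ (by rwa [IsUnit.neg_iff]), neg_zero]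

lemma tendsto_star_cobounded {E : Type*} [SeminormedAddCommGroup E] [StarAddMonoid E]
    [NormedStarGroup E] : Tendsto (star : E → E) (cobounded E) (cobounded E) :=
  tendsto_norm_atTop_iff_cobounded.mp <| by
    simpa only [norm_star] using tendsto_norm_cobounded_atTop

lemma Filter.forall_eq_zero_of_eventually_eq_add_smul {α E : Type*} [TopologicalSpace E]
    [T2Space E] [AddZeroClass E] [SMulZeroClass α E] {l : Filter α} [l.NeBot]
    {F : ℕ → α → E} {c : E} {M : ℕ → E} (hF : ∀ n, Tendsto (F n) l (𝓝 0))
    (h₀ : ∀ᶠ x in l, F 0 x = c) (hrec : ∀ n, ∀ᶠ x in l, F (n + 1) x = M n + x • F n x) :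
    c = 0 ∧ ∀ n, M n = 0 := by
  have limit_eq {n : ℕ} {b : E} (hb : ∀ᶠ x in l, F n x = b) : b = 0 :=
    tendsto_nhds_unique_of_eventuallyEq tendsto_const_nhds (hF n) (hb.mono fun _ => Eq.symm)
  have step {n : ℕ} (hn : ∀ᶠ x in l, F n x = 0) : ∀ᶠ x in l, F (n + 1) x = M n := by
    filter_upwards [hn, hrec n] with x hx hx'
    rw [hx', hx, smul_zero, add_zero]
  have hc : c = 0 := limit_eq h₀
  have vanish (n : ℕ) : ∀ᶠ x in l, F n x = 0 := by
    induction n with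
    | zero => exact hc ▸ h₀
    | succ n ih => exact limit_eq (step ih) ▸ step ih
  exact ⟨hc, fun n => limit_eq (step (vanish n))⟩

namespace Matrix

section ResolventAtInfinity

variable {𝕜 n : Type*} [NontriviallyNormedField 𝕜] [Fintype n] [DecidableEq n]

attribute [local instance] Matrix.linftyOpNormedRing Matrix.linftyOpNormedAlgebra

lemma inv_sub_smul_one_eq_neg_resolvent (A : Matrix n n 𝕜) (z : 𝕜) :
    (A - z • 1)⁻¹ = -resolvent A z := by
  rw [resolvent, Algebra.algebraMap_eq_smul_one, nonsing_inv_eq_ringInverse, ← neg_sub,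
    Ring.inverse_neg]

variable [CompleteSpace 𝕜]

-- The global `CompleteSpace (Matrix n n 𝕜)` instance is for the entrywise uniformity, which is
-- not reducibly that of the operator norm, so completeness is passed by hand below.
lemma eventually_isUnit_sub_smul_one (A : Matrix n n 𝕜) :
    ∀ᶠ z in cobounded 𝕜, IsUnit (A - z • 1) := by
  filter_upwards [@spectrum.eventually_isUnit_resolvent 𝕜 _ _ _ _
    (FiniteDimensional.complete 𝕜 _) A] with z hz
  rw [← neg_sub, IsUnit.neg_iff, ← Algebra.algebraMap_eq_smul_one]
  exact spectrum.isUnit_resolvent.mpr hz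

lemma tendsto_mul_inv_sub_smul_one_cobounded (M A : Matrix n n 𝕜) :
    Tendsto (fun z => M * (A - z • 1)⁻¹) (cobounded 𝕜) (𝓝 0) := by
  have h := ((@spectrum.resolvent_tendsto_cobounded 𝕜 _ _ _ _
    (FiniteDimensional.complete 𝕜 _) A).neg).const_mul M
  rw [neg_zero, Matrix.mul_zero] at h
  simp_rw [inv_sub_smul_one_eq_neg_resolvent]
  exact h

end ResolventAtInfinity

section ResolventIdentity

variable {K n : Type*} [CommRing K] [Fintype n] [DecidableEq n]

lemma mul_inv_sub_smul_one {A : Matrix n n K} {z : K} (hz : IsUnit (A - z • 1)) :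
    A * (A - z • 1)⁻¹ = 1 + z • (A - z • 1)⁻¹ := by
  have h := mul_nonsing_inv _ ((isUnit_iff_isUnit_det _).mp hz)
  rw [Matrix.sub_mul, smul_mul_assoc, Matrix.one_mul] at h
  exact eq_add_of_sub_eq h

lemma pow_succ_mul_inv_sub_smul_one {A : Matrix n n K} {z : K} (hz : IsUnit (A - z • 1))
    (k : ℕ) : A ^ (k + 1) * (A - z • 1)⁻¹ = A ^ k + z • (A ^ k * (A - z • 1)⁻¹) := by
  rw [pow_succ, Matrix.mul_assoc, mul_inv_sub_smul_one hz, Matrix.mul_add, Matrix.mul_one,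
    Matrix.mul_smul]

end ResolventIdentity

section SandwichDefect

variable {K p q : Type*} [CommRing K] [StarRing K] [Fintype p] [Fintype q] [DecidableEq q]
  (L : Matrix q q K) (C : Matrix q p K) (B : Matrix p q K)

noncomputable def sandwichDefect (X Y : Matrix p p K) : Matrix q q K :=
  L * (C * X * B) * L⁻¹ - (C * Y * B)ᴴ

lemma sandwichDefect_add (X X' Y Y' : Matrix p p K) :
    sandwichDefect L C B (X + X') (Y + Y') =
      sandwichDefect L C B X Y + sandwichDefect L C B X' Y' := by
  simp only [sandwichDefect, Matrix.mul_add, Matrix.add_mul, conjTranspose_add]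
  abel

lemma sandwichDefect_smul_star (z : K) (X Y : Matrix p p K) :
    sandwichDefect L C B (z • X) (star z • Y) = z • sandwichDefect L C B X Y := by
  simp only [sandwichDefect, Matrix.mul_smul, Matrix.smul_mul, conjTranspose_smul, star_star,
    smul_sub]

lemma sub_conjTranspose_eq_sandwichDefect {D : Matrix q q K} {X Y : Matrix p p K}
    (h : L * (D - C * X * B) * L⁻¹ = (D - C * Y * B)ᴴ) :
    L * D * L⁻¹ - Dᴴ = sandwichDefect L C B X Y := by
  rwa [Matrix.mul_sub, Matrix.sub_mul, conjTranspose_sub, sub_eq_sub_iff_sub_eq_sub] at h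

lemma tendsto_sandwichDefect [TopologicalSpace K] [IsTopologicalRing K] [ContinuousStar K]
    {α : Type*} {l : Filter α} {X Y : α → Matrix p p K} (hX : Tendsto X l (𝓝 0))
    (hY : Tendsto Y l (𝓝 0)) :
    Tendsto (fun x => sandwichDefect L C B (X x) (Y x)) l (𝓝 0) := by
  have hcont : Continuous fun XY : Matrix p p K × Matrix p p K =>
      sandwichDefect L C B XY.1 XY.2 := by
    unfold sandwichDefect
    fun_prop
  have h := (hcont.tendsto (0, 0)).comp (hX.prodMk_nhds hY)
  rwa [show sandwichDefect L C B (0 : Matrix p p K) 0 = 0 by simp [sandwichDefect]] at h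

end SandwichDefect

end Matrix

theorem isospectral_symmetry_implies_block_relations_general (p q : ℕ)
    (A : Matrix (Fin p) (Fin p) ℂ) (B : Matrix (Fin p) (Fin q) ℂ)
    (C : Matrix (Fin q) (Fin p) ℂ) (D : Matrix (Fin q) (Fin q) ℂ)
    (L : Matrix (Fin q) (Fin q) ℂ)
    (h : ∃ c : ℝ, ∀ ω : ℂ, c < ‖ω‖ →
        L * (D - C * (A - ω • 1)⁻¹ * B) * L⁻¹
          = (D - C * (A - (starRingEnd ℂ ω) • 1)⁻¹ * B)ᴴ) :
    L * D * L⁻¹ = Dᴴ ∧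
      ∀ n : ℕ, L * (C * A ^ n * B) * L⁻¹ = (C * A ^ n * B)ᴴ := by
  obtain ⟨c, hc⟩ := h
  have hsym := (tendsto_norm_cobounded_atTop.eventually_gt_atTop c).mono hc
  have hunit := eventually_isUnit_sub_smul_one A
  have hunit_star := tendsto_star_cobounded.eventually hunit
  refine (forall_eq_zero_of_eventually_eq_add_smul
    (F := fun k ω => sandwichDefect L C B (A ^ k * (A - ω • 1)⁻¹) (A ^ k * (A - star ω • 1)⁻¹))
    (M := fun k => sandwichDefect L C B (A ^ k) (A ^ k))
    (fun k => tendsto_sandwichDefect L C B (tendsto_mul_inv_sub_smul_one_cobounded _ A)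
      ((tendsto_mul_inv_sub_smul_one_cobounded _ A).comp tendsto_star_cobounded)) ?_ ?_).imp
    sub_eq_zero.mp fun hM k => sub_eq_zero.mp (hM k)
  · filter_upwards [hsym] with ω hω
    rw [starRingEnd_apply] at hω
    simpa only [pow_zero, Matrix.one_mul] using (sub_conjTranspose_eq_sandwichDefect L C B hω).symm
  · intro k
    filter_upwards [hunit, hunit_star] with ω hω hω_star
    rw [pow_succ_mul_inv_sub_smul_one hω, pow_succ_mul_inv_sub_smul_one hω_star,
      sandwichDefect_add, sandwichDefect_smul_star]

/-- If the symmetry `L R_S(H,ω) L⁻¹ = R_S(H,ω*)†` of the isospectral reduction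
holds for all ω of sufficiently large modulus, then L conjugates H_SS and all
the matrices `H_SS̄ (H_S̄S̄)^n H_S̄S` to their Hermitian adjoints. -/
theorem isospectral_symmetry_implies_block_relations (p q : ℕ)
    (A : Matrix (Fin p) (Fin p) ℂ) (B : Matrix (Fin p) (Fin q) ℂ)
    (C : Matrix (Fin q) (Fin p) ℂ) (D : Matrix (Fin q) (Fin q) ℂ)
    (L : Matrix (Fin q) (Fin q) ℂ) (hL : IsUnit L)
    (h : ∃ c : ℝ, ∀ ω : ℂ, c < ‖ω‖ →
        L * (D - C * (A - ω • 1)⁻¹ * B) * L⁻¹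
          = (D - C * (A - (starRingEnd ℂ ω) • 1)⁻¹ * B)ᴴ) :
    L * D * L⁻¹ = Dᴴ ∧
      ∀ n : ℕ, L * (C * A ^ n * B) * L⁻¹ = (C * A ^ n * B)ᴴ :=
  isospectral_symmetry_implies_block_relations_general p q A B C D L h
end

section
/- Let H be a block matrix and L an invertible q×q matrix such that L H_SS L⁻¹ = H_SS† and L [H_SS̄ (H_S̄S̄)^n H_S̄S] L⁻¹ = [H_SS̄ (H_S̄S̄)^n H_S̄S]† for all n ≥ 0. Then L (H^n)_SS L⁻¹ = ((H^n)_SS)† for all n ≥ 0. -/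
open Matrix Finset

section Aux

variable {p q : ℕ}
variable (A : Matrix (Fin p) (Fin p) ℂ) (B : Matrix (Fin p) (Fin q) ℂ)
variable (C : Matrix (Fin q) (Fin p) ℂ) (D : Matrix (Fin q) (Fin q) ℂ)

local notation "H" => Matrix.fromBlocks A B C D

lemma mul_blocks₂₁ (M : Matrix (Fin p ⊕ Fin q) (Fin p ⊕ Fin q) ℂ) :
    (M * H).toBlocks₂₁ = M.toBlocks₂₁ * A + M.toBlocks₂₂ * C := by
  conv_lhs => rw [← Matrix.fromBlocks_toBlocks M, Matrix.fromBlocks_multiply]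
  rfl

lemma mul_blocks₂₂ (M : Matrix (Fin p ⊕ Fin q) (Fin p ⊕ Fin q) ℂ) :
    (M * H).toBlocks₂₂ = M.toBlocks₂₁ * B + M.toBlocks₂₂ * D := by
  conv_lhs => rw [← Matrix.fromBlocks_toBlocks M, Matrix.fromBlocks_multiply]
  rfl

lemma blocks_mul₁₂ (M : Matrix (Fin p ⊕ Fin q) (Fin p ⊕ Fin q) ℂ) :
    (H * M).toBlocks₁₂ = A * M.toBlocks₁₂ + B * M.toBlocks₂₂ := by
  conv_lhs => rw [← Matrix.fromBlocks_toBlocks M, Matrix.fromBlocks_multiply]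
  rfl

lemma blocks_mul₂₂ (M : Matrix (Fin p ⊕ Fin q) (Fin p ⊕ Fin q) ℂ) :
    (H * M).toBlocks₂₂ = C * M.toBlocks₁₂ + D * M.toBlocks₂₂ := by
  conv_lhs => rw [← Matrix.fromBlocks_toBlocks M, Matrix.fromBlocks_multiply]
  rfl

lemma pow_blocks₂₁ : ∀ n : ℕ, (H ^ n).toBlocks₂₁
    = ∑ m ∈ range n, (H ^ m).toBlocks₂₂ * C * A ^ (n - 1 - m) := by
  intro n
  induction n with
  | zero => simp [pow_zero, ← Matrix.fromBlocks_one, Matrix.toBlocks_fromBlocks₂₁]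
  | succ n ih =>
    rw [pow_succ, mul_blocks₂₁, ih, Finset.sum_range_succ, Matrix.sum_mul]
    have h1 : ∀ m ∈ range n,
        (H ^ m).toBlocks₂₂ * C * A ^ (n - 1 - m) * A
          = (H ^ m).toBlocks₂₂ * C * A ^ (n + 1 - 1 - m) := by
      intro m hm
      rw [Finset.mem_range] at hm
      have h2 : n + 1 - 1 - m = (n - 1 - m) + 1 := by omega
      rw [h2, pow_succ, Matrix.mul_assoc]
    rw [Finset.sum_congr rfl h1]
    simp [Nat.sub_self]

lemma pow_blocks₁₂ : ∀ n : ℕ, (H ^ n).toBlocks₁₂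
    = ∑ m ∈ range n, A ^ (n - 1 - m) * B * (H ^ m).toBlocks₂₂ := by
  intro n
  induction n with
  | zero => simp [pow_zero, ← Matrix.fromBlocks_one, Matrix.toBlocks_fromBlocks₁₂]
  | succ n ih =>
    rw [pow_succ', blocks_mul₁₂, ih, Finset.sum_range_succ, Matrix.mul_sum]
    have h1 : ∀ m ∈ range n,
        A * (A ^ (n - 1 - m) * B * (H ^ m).toBlocks₂₂)
          = A ^ (n + 1 - 1 - m) * B * (H ^ m).toBlocks₂₂ := by
      intro m hm
      rw [Finset.mem_range] at hm
      have h2 : n + 1 - 1 - m = (n - 1 - m) + 1 := by omega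
      rw [h2, pow_succ']
      simp [Matrix.mul_assoc]
    rw [Finset.sum_congr rfl h1]
    simp [Nat.sub_self]

lemma pow_succ_blocks₂₂_right (n : ℕ) : (H ^ (n + 1)).toBlocks₂₂
    = ∑ m ∈ range n, (H ^ m).toBlocks₂₂ * (C * A ^ (n - 1 - m) * B)
      + (H ^ n).toBlocks₂₂ * D := by
  rw [pow_succ, mul_blocks₂₂, pow_blocks₂₁, Matrix.sum_mul]
  congr 1
  refine Finset.sum_congr rfl fun m _ => ?_
  simp [Matrix.mul_assoc]

lemma pow_succ_blocks₂₂_left (n : ℕ) : (H ^ (n + 1)).toBlocks₂₂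
    = ∑ m ∈ range n, (C * A ^ (n - 1 - m) * B) * (H ^ m).toBlocks₂₂
      + D * (H ^ n).toBlocks₂₂ := by
  rw [pow_succ', blocks_mul₂₂, pow_blocks₁₂, Matrix.mul_sum]
  congr 1
  refine Finset.sum_congr rfl fun m _ => ?_
  simp [Matrix.mul_assoc]

end Aux

/-- If `L H_SS L⁻¹ = H_SS†` and `L (H_SS̄ (H_S̄S̄)^n H_S̄S) L⁻¹ = (H_SS̄ (H_S̄S̄)^n H_S̄S)†`
for all n, then the non-Hermitian latent symmetry `L (H^n)_SS L⁻¹ = ((H^n)_SS)†`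
holds for all n. -/
theorem block_relations_imply_latent_symmetry (p q : ℕ)
    (A : Matrix (Fin p) (Fin p) ℂ) (B : Matrix (Fin p) (Fin q) ℂ)
    (C : Matrix (Fin q) (Fin p) ℂ) (D : Matrix (Fin q) (Fin q) ℂ)
    (L : Matrix (Fin q) (Fin q) ℂ) (hL : IsUnit L)
    (hD : L * D * L⁻¹ = Dᴴ)
    (hCAB : ∀ n : ℕ, L * (C * A ^ n * B) * L⁻¹ = (C * A ^ n * B)ᴴ) :
    ∀ n : ℕ, L * ((Matrix.fromBlocks A B C D) ^ n).toBlocks₂₂ * L⁻¹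
      = (((Matrix.fromBlocks A B C D) ^ n).toBlocks₂₂)ᴴ := by
  have hdet : IsUnit L.det := (Matrix.isUnit_iff_isUnit_det L).mp hL
  have hinv : L⁻¹ * L = 1 := Matrix.nonsing_inv_mul L hdet
  have hmul : ∀ X Y : Matrix (Fin q) (Fin q) ℂ,
      L * (X * Y) * L⁻¹ = (L * X * L⁻¹) * (L * Y * L⁻¹) := by
    intro X Y
    calc L * (X * Y) * L⁻¹ = L * X * (L⁻¹ * L) * Y * L⁻¹ := by rw [hinv]; noncomm_ring
    _ = (L * X * L⁻¹) * (L * Y * L⁻¹) := by noncomm_ring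
  intro n
  induction n using Nat.strong_induction_on with
  | _ n ih =>
    match n with
    | 0 =>
      rw [pow_zero, ← Matrix.fromBlocks_one, Matrix.toBlocks_fromBlocks₂₂, mul_one,
        Matrix.mul_nonsing_inv L hdet, Matrix.conjTranspose_one]
    | Nat.succ n =>
      conv_rhs => rw [pow_succ_blocks₂₂_left A B C D n]
      rw [pow_succ_blocks₂₂_right A B C D n, mul_add, add_mul, Matrix.mul_sum, Matrix.sum_mul]
      have step : ∀ m ∈ Finset.range n,
          L * ((Matrix.fromBlocks A B C D ^ m).toBlocks₂₂ * (C * A ^ (n - 1 - m) * B)) * L⁻¹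
            = ((C * A ^ (n - 1 - m) * B) * (Matrix.fromBlocks A B C D ^ m).toBlocks₂₂)ᴴ := by
        intro m hm
        rw [Finset.mem_range] at hm
        rw [hmul, ih m (by omega), hCAB]
        simp [Matrix.conjTranspose_mul, Matrix.mul_assoc]
      rw [Finset.sum_congr rfl step]
      have stepD : L * ((Matrix.fromBlocks A B C D ^ n).toBlocks₂₂ * D) * L⁻¹
          = (D * (Matrix.fromBlocks A B C D ^ n).toBlocks₂₂)ᴴ := by
        rw [hmul, ih n (by omega), hD, Matrix.conjTranspose_mul]
      rw [stepD, Matrix.conjTranspose_add]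
      congr 1
      rw [← Matrix.conjTranspose_sum]
end

section
/- Let H be a block matrix and L an invertible q×q matrix such that L (H^n)_SS L⁻¹ = ((H^n)_SS)† for all n ≥ 0 (non-Hermitian latent symmetry). Then L [H_SS̄ (H_S̄S̄)^n H_S̄S] L⁻¹ = [H_SS̄ (H_S̄S̄)^n H_S̄S]† for all n ≥ 0. -/
/-!
Write `S k` for the lower-right block of `H ^ k` and `M i = C * A ^ i * B`. Expanding
`H ^ (k + 2)` as `H * H ^ (k + 1)` and as `H ^ (k + 1) * H` gives
`S (k + 2) = D * S (k + 1) + ∑_{i + j = k} M i * S j = S (k + 1) * D + ∑_{i + j = k} S j * M i`.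
Using `L * S j = (S j)ᴴ * L` on the first form and on the conjugate transpose of the second,
`L * S (k + 2) = (S (k + 2))ᴴ * L` becomes `∑_{i + j = k} (L * M i - (M i)ᴴ * L) * S j = 0`.
By strong induction on `k` only the term `j = 0` survives, and `S 0 = 1`.
-/

open Matrix Finset

section StarRing

variable {R : Type*} [Ring R] [StarRing R] {L D : R} {S M : ℕ → R}

theorem sum_antidiagonal_mul_sub_star_mul_mul_eq_zero (hS : ∀ j, L * S j = star (S j) * L)
    (hD : L * D = star D * L)
    (hleft : ∀ k, S (k + 2) = D * S (k + 1) + ∑ p ∈ antidiagonal k, M p.1 * S p.2)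
    (hright : ∀ k, S (k + 2) = S (k + 1) * D + ∑ p ∈ antidiagonal k, S p.2 * M p.1) (k : ℕ) :
    ∑ p ∈ antidiagonal k, (L * M p.1 - star (M p.1) * L) * S p.2 = 0 := by
  have hl : L * S (k + 2)
      = star D * L * S (k + 1) + ∑ p ∈ antidiagonal k, L * M p.1 * S p.2 := by
    simp only [hleft, mul_add, mul_sum, ← mul_assoc, hD]
  have hr : star (S (k + 2)) * L
      = star D * L * S (k + 1) + ∑ p ∈ antidiagonal k, star (M p.1) * L * S p.2 := by
    simp only [hright, star_add, star_sum, star_mul, add_mul, sum_mul, mul_assoc, hS]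
  simp only [sub_mul, sum_sub_distrib, sub_eq_zero]
  exact add_left_cancel (hl.symm.trans ((hS (k + 2)).trans hr))

theorem mul_eq_star_mul_of_recurrence (hS : ∀ j, L * S j = star (S j) * L) (hS₀ : S 0 = 1)
    (hS₁ : S 1 = D)
    (hleft : ∀ k, S (k + 2) = D * S (k + 1) + ∑ p ∈ antidiagonal k, M p.1 * S p.2)
    (hright : ∀ k, S (k + 2) = S (k + 1) * D + ∑ p ∈ antidiagonal k, S p.2 * M p.1) (n : ℕ) :
    L * M n = star (M n) * L := by
  have hD : L * D = star D * L := hS₁ ▸ hS 1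
  induction n using Nat.strong_induction_on with
  | _ n ih =>
    have hsum := sum_antidiagonal_mul_sub_star_mul_mul_eq_zero hS hD hleft hright n
    rw [sum_eq_single_of_mem (n, 0) (by simp), hS₀, mul_one, sub_eq_zero] at hsum
    · exact hsum
    rintro ⟨i, j⟩ hij hne
    have hi : i < n := by
      rw [HasAntidiagonal.mem_antidiagonal] at hij
      by_contra!
      exact hne (by ext <;> simp <;> omega)
    rw [ih i hi, sub_self, zero_mul]

end StarRing

namespace Matrix

section Multiply

variable {l m n o k p α : Type*} [NonUnitalNonAssocSemiring α]
  (A : Matrix n l α) (B : Matrix n m α) (C : Matrix o l α) (D : Matrix o m α)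

theorem toBlocks₁₂_fromBlocks_mul [Fintype l] [Fintype m] (M : Matrix (l ⊕ m) (k ⊕ p) α) :
    (fromBlocks A B C D * M).toBlocks₁₂ = A * M.toBlocks₁₂ + B * M.toBlocks₂₂ := by
  rw [← fromBlocks_toBlocks M, fromBlocks_multiply]; simp

theorem toBlocks₂₂_fromBlocks_mul [Fintype l] [Fintype m] (M : Matrix (l ⊕ m) (k ⊕ p) α) :
    (fromBlocks A B C D * M).toBlocks₂₂ = C * M.toBlocks₁₂ + D * M.toBlocks₂₂ := by
  rw [← fromBlocks_toBlocks M, fromBlocks_multiply]; simp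

theorem toBlocks₂₁_mul_fromBlocks [Fintype n] [Fintype o] (M : Matrix (k ⊕ p) (n ⊕ o) α) :
    (M * fromBlocks A B C D).toBlocks₂₁ = M.toBlocks₂₁ * A + M.toBlocks₂₂ * C := by
  rw [← fromBlocks_toBlocks M, fromBlocks_multiply]; simp

theorem toBlocks₂₂_mul_fromBlocks [Fintype n] [Fintype o] (M : Matrix (k ⊕ p) (n ⊕ o) α) :
    (M * fromBlocks A B C D).toBlocks₂₂ = M.toBlocks₂₁ * B + M.toBlocks₂₂ * D := by
  rw [← fromBlocks_toBlocks M, fromBlocks_multiply]; simp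

end Multiply

section Pow

variable {m n R : Type*} [Fintype m] [Fintype n] [DecidableEq m] [DecidableEq n] [Semiring R]
  (A : Matrix m m R) (B : Matrix m n R) (C : Matrix n m R) (D : Matrix n n R)

theorem toBlocks₁₂_fromBlocks_pow_succ (k : ℕ) :
    (fromBlocks A B C D ^ (k + 1)).toBlocks₁₂
      = ∑ p ∈ antidiagonal k, A ^ p.1 * B * (fromBlocks A B C D ^ p.2).toBlocks₂₂ := by
  induction k with
  | zero => simp [pow_succ', toBlocks₁₂_fromBlocks_mul, ← fromBlocks_one]
  | succ k ih =>
    rw [pow_succ', toBlocks₁₂_fromBlocks_mul, ih, Nat.sum_antidiagonal_succ, Matrix.mul_sum,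
      add_comm]
    simp only [pow_zero, Matrix.one_mul, pow_succ' A, Matrix.mul_assoc]

theorem toBlocks₂₁_fromBlocks_pow_succ (k : ℕ) :
    (fromBlocks A B C D ^ (k + 1)).toBlocks₂₁
      = ∑ p ∈ antidiagonal k, (fromBlocks A B C D ^ p.2).toBlocks₂₂ * C * A ^ p.1 := by
  induction k with
  | zero => simp [pow_succ, toBlocks₂₁_mul_fromBlocks, ← fromBlocks_one]
  | succ k ih =>
    rw [pow_succ, toBlocks₂₁_mul_fromBlocks, ih, Nat.sum_antidiagonal_succ, Matrix.sum_mul,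
      add_comm]
    simp only [pow_zero, Matrix.mul_one, pow_succ A, Matrix.mul_assoc]

theorem toBlocks₂₂_fromBlocks_pow_add_two (k : ℕ) :
    (fromBlocks A B C D ^ (k + 2)).toBlocks₂₂ = D * (fromBlocks A B C D ^ (k + 1)).toBlocks₂₂
      + ∑ p ∈ antidiagonal k, C * A ^ p.1 * B * (fromBlocks A B C D ^ p.2).toBlocks₂₂ := by
  rw [pow_succ', toBlocks₂₂_fromBlocks_mul, toBlocks₁₂_fromBlocks_pow_succ, Matrix.mul_sum,
    add_comm]
  simp only [Matrix.mul_assoc]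

theorem toBlocks₂₂_fromBlocks_pow_add_two' (k : ℕ) :
    (fromBlocks A B C D ^ (k + 2)).toBlocks₂₂ = (fromBlocks A B C D ^ (k + 1)).toBlocks₂₂ * D
      + ∑ p ∈ antidiagonal k, (fromBlocks A B C D ^ p.2).toBlocks₂₂ * (C * A ^ p.1 * B) := by
  rw [pow_succ, toBlocks₂₂_mul_fromBlocks, toBlocks₂₁_fromBlocks_pow_succ, Matrix.sum_mul,
    add_comm]
  simp only [Matrix.mul_assoc]

end Pow

end Matrix

theorem latent_symmetry_implies_block_relations_general (p q : ℕ)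
    (A : Matrix (Fin p) (Fin p) ℂ) (B : Matrix (Fin p) (Fin q) ℂ)
    (C : Matrix (Fin q) (Fin p) ℂ) (D : Matrix (Fin q) (Fin q) ℂ)
    (L : Matrix (Fin q) (Fin q) ℂ)
    (hlatent : ∀ n : ℕ, L * ((Matrix.fromBlocks A B C D) ^ n).toBlocks₂₂ * L⁻¹
      = (((Matrix.fromBlocks A B C D) ^ n).toBlocks₂₂)ᴴ) :
    ∀ n : ℕ, L * (C * A ^ n * B) * L⁻¹ = (C * A ^ n * B)ᴴ := by
  have : Invertible L :=
    invertibleOfRightInverse L L⁻¹ (by simpa [← fromBlocks_one] using hlatent 0)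
  intro n
  rw [mul_inv_eq_iff_eq_mul_of_invertible]
  refine mul_eq_star_mul_of_recurrence
    (S := fun k => (fromBlocks A B C D ^ k).toBlocks₂₂) (M := fun i => C * A ^ i * B)
    (fun k => (mul_inv_eq_iff_eq_mul_of_invertible _ _ _).mp (hlatent k)) ?_ ?_
    (toBlocks₂₂_fromBlocks_pow_add_two A B C D) (toBlocks₂₂_fromBlocks_pow_add_two' A B C D) n
  · rw [pow_zero, ← fromBlocks_one, toBlocks_fromBlocks₂₂]
  · simp only [pow_one, toBlocks_fromBlocks₂₂]

/-- The non-Hermitian latent symmetry `L (H^n)_SS L⁻¹ = ((H^n)_SS)†` for all n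
implies `L (H_SS̄ (H_S̄S̄)^n H_S̄S) L⁻¹ = (H_SS̄ (H_S̄S̄)^n H_S̄S)†` for all n. -/
theorem latent_symmetry_implies_block_relations (p q : ℕ)
    (A : Matrix (Fin p) (Fin p) ℂ) (B : Matrix (Fin p) (Fin q) ℂ)
    (C : Matrix (Fin q) (Fin p) ℂ) (D : Matrix (Fin q) (Fin q) ℂ)
    (L : Matrix (Fin q) (Fin q) ℂ) (hL : IsUnit L)
    (hlatent : ∀ n : ℕ, L * ((Matrix.fromBlocks A B C D) ^ n).toBlocks₂₂ * L⁻¹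
      = (((Matrix.fromBlocks A B C D) ^ n).toBlocks₂₂)ᴴ) :
    ∀ n : ℕ, L * (C * A ^ n * B) * L⁻¹ = (C * A ^ n * B)ᴴ :=
  latent_symmetry_implies_block_relations_general p q A B C D L hlatent
end

section
/- Let H be a block matrix and L an invertible q×q matrix. Then the non-Hermitian latent symmetry L (H^n)_SS L⁻¹ = ((H^n)_SS)† for all n ∈ ℕ holds if and only if the isospectral reduction satisfies L R_S(H,ω) L⁻¹ = R_S(H,ω*)† for all ω outside the spectrum of H_S̄S̄ with |ω| larger than the operator norm of H_S̄S̄. -/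
/-!
Both sides of the equivalence are statements about the coefficients `D, C B, C A B, C A² B, …`
of `R_S(H, ω) = D + ∑ₖ ω⁻⁽ᵏ⁺¹⁾ C Aᵏ B`, valid for `‖ω‖ > ‖A‖`.  Conjugating by `L` and taking `†`
turns the two sides into comparisons of `H₁ = diag(1, L) H diag(1, L)⁻¹` with `H₂ = H†`: the
latent symmetry says `(H₁ⁿ)_SS = (H₂ⁿ)_SS` for all `n`, the isospectral one
`R_S(H₁, ω) = R_S(H₂, ω)` for large `ω`.  The blocks `(Hⁿ)_SS` satisfy a convolution recursion
with these coefficients, so they determine them and conversely; and the reduction determines its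
coefficients by uniqueness of power series expansions in `ω⁻¹` around `0`.
-/

open Filter Topology Finset Matrix

theorem eq_zero_of_eventually_hasSum_zero {𝕜 E : Type*} [NontriviallyNormedField 𝕜]
    [NormedAddCommGroup E] [NormedSpace 𝕜 E] [CompleteSpace E] {a : ℕ → E}
    (h : ∀ᶠ z in 𝓝[≠] (0 : 𝕜), HasSum (fun k ↦ z ^ k • a k) 0) : a = 0 := by
  let p : FormalMultilinearSeries 𝕜 𝕜 E := fun k ↦ ContinuousMultilinearMap.mkPiRing 𝕜 (Fin k) (a k)
  have hp : ∀ k z, p k (fun _ ↦ z) = z ^ k • a k := by simp [p]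
  obtain ⟨z₀, hz₀, hz₀_ne⟩ := (h.and self_mem_nhdsWithin).exists
  have hradius : 0 < p.radius := by
    refine lt_of_lt_of_le ?_ (p.le_radius_of_tendsto (r := ‖z₀‖₊) (l := 0) ?_)
    · simpa using hz₀_ne
    · simpa [p, norm_smul, mul_comm] using hz₀.summable.tendsto_atTop_zero.norm
  have hf : HasFPowerSeriesAt p.sum p 0 := (p.hasFPowerSeriesOnBall hradius).hasFPowerSeriesAt
  -- isolated zeros: vanishing on a punctured neighbourhood forces vanishing near `0`
  have hsum : ∀ᶠ z in 𝓝 0, p.sum z = 0 := by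
    refine hf.analyticAt.frequently_zero_iff_eventually_zero.mp (h.frequently.mono fun z hz ↦ ?_)
    simpa [FormalMultilinearSeries.sum, hp] using hz.tsum_eq
  funext k
  simpa [hp] using congrArg (fun q ↦ q k fun _ ↦ 1) (hf.eq_zero_of_eventually hsum)

namespace Matrix

variable {R : Type*} {l m n o m' n' : Type*}

lemma toBlocks₁₂_mul [NonUnitalNonAssocSemiring R] [Fintype n] [Fintype o]
    (M : Matrix (l ⊕ m) (n ⊕ o) R) (N : Matrix (n ⊕ o) (m' ⊕ n') R) :
    (M * N).toBlocks₁₂ = M.toBlocks₁₁ * N.toBlocks₁₂ + M.toBlocks₁₂ * N.toBlocks₂₂ := by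
  conv_lhs => rw [← fromBlocks_toBlocks M, ← fromBlocks_toBlocks N, fromBlocks_multiply]
  rfl

lemma toBlocks₂₂_mul [NonUnitalNonAssocSemiring R] [Fintype n] [Fintype o]
    (M : Matrix (l ⊕ m) (n ⊕ o) R) (N : Matrix (n ⊕ o) (m' ⊕ n') R) :
    (M * N).toBlocks₂₂ = M.toBlocks₂₁ * N.toBlocks₁₂ + M.toBlocks₂₂ * N.toBlocks₂₂ := by
  conv_lhs => rw [← fromBlocks_toBlocks M, ← fromBlocks_toBlocks N, fromBlocks_multiply]
  rfl

lemma toBlocks₂₂_conjTranspose [Star R] (M : Matrix (l ⊕ m) (n ⊕ o) R) :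
    Mᴴ.toBlocks₂₂ = M.toBlocks₂₂ᴴ := rfl

@[simp] lemma toBlocks₂₂_one [DecidableEq m] [DecidableEq n] [Zero R] [One R] :
    (1 : Matrix (m ⊕ n) (m ⊕ n) R).toBlocks₂₂ = 1 := by
  rw [← fromBlocks_one, toBlocks_fromBlocks₂₂]

variable [Fintype m] [DecidableEq m]

/-- The Markov parameters `D, C B, C A B, C A² B, …` of `H = [A B; C D]`, i.e. the coefficients
of `R_S(H, ω)` in powers of `ω⁻¹`. -/
def markovParam [Semiring R] (H : Matrix (m ⊕ n) (m ⊕ n) R) : ℕ → Matrix n n R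
  | 0 => H.toBlocks₂₂
  | k + 1 => H.toBlocks₂₁ * H.toBlocks₁₁ ^ k * H.toBlocks₁₂

section Powers

variable [Fintype n] [DecidableEq n]

lemma toBlocks₁₂_pow_succ [Semiring R] (H : Matrix (m ⊕ n) (m ⊕ n) R) (k : ℕ) :
    (H ^ (k + 1)).toBlocks₁₂
      = ∑ ij ∈ antidiagonal k, H.toBlocks₁₁ ^ ij.1 * H.toBlocks₁₂ * (H ^ ij.2).toBlocks₂₂ := by
  induction k with
  | zero => simp
  | succ k ih =>
    rw [pow_succ' H (k + 1), toBlocks₁₂_mul, ih, Nat.sum_antidiagonal_succ, Matrix.mul_sum,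
      add_comm]
    simp only [pow_succ', Matrix.mul_assoc, pow_zero, Matrix.one_mul]

lemma toBlocks₂₂_pow_succ [Semiring R] (H : Matrix (m ⊕ n) (m ⊕ n) R) (k : ℕ) :
    (H ^ (k + 1)).toBlocks₂₂
      = ∑ ij ∈ antidiagonal k, markovParam H ij.1 * (H ^ ij.2).toBlocks₂₂ := by
  cases k with
  | zero => simp [markovParam]
  | succ k =>
    rw [pow_succ' H (k + 1), toBlocks₂₂_mul, toBlocks₁₂_pow_succ, Nat.sum_antidiagonal_succ,
      Matrix.mul_sum, add_comm]
    simp only [markovParam, Matrix.mul_assoc]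

theorem toBlocks₂₂_pow_eq_iff_markovParam_eq [Ring R] [Fintype m'] [DecidableEq m']
    (H : Matrix (m ⊕ n) (m ⊕ n) R) (H' : Matrix (m' ⊕ n) (m' ⊕ n) R) :
    (∀ k, (H ^ k).toBlocks₂₂ = (H' ^ k).toBlocks₂₂) ↔ markovParam H = markovParam H' := by
  constructor
  · intro h
    funext k
    induction k using Nat.strong_induction_on with
    | _ k ih =>
      -- in `(H ^ (k + 1))₂₂` only the term `markovParam H k * 1` is not yet known to agree
      have hk := h (k + 1)
      simp only [toBlocks₂₂_pow_succ, Nat.sum_antidiagonal_eq_sum_range_succ_mk, sum_range_succ,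
        Nat.sub_self, pow_zero, toBlocks₂₂_one, Matrix.mul_one] at hk
      rwa [sum_congr rfl fun i hi ↦ by rw [ih i (mem_range.mp hi), h], add_right_inj] at hk
  · intro h k
    induction k using Nat.strong_induction_on with
    | _ k ih =>
      cases k with
      | zero => simp
      | succ k =>
        rw [toBlocks₂₂_pow_succ, toBlocks₂₂_pow_succ, h]
        exact sum_congr rfl fun ij hij ↦ by rw [ih ij.2 (Nat.antidiagonal.snd_lt hij)]

lemma toBlocks₂₂_pow_fromBlocks_conj [CommRing R] (A : Matrix m m R) (B : Matrix m n R)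
    (C : Matrix n m R) (D : Matrix n n R) {L : Matrix n n R} (hL : IsUnit L) (k : ℕ) :
    (fromBlocks A (B * L⁻¹) (L * C) (L * D * L⁻¹) ^ k).toBlocks₂₂
      = L * (fromBlocks A B C D ^ k).toBlocks₂₂ * L⁻¹ := by
  rw [isUnit_iff_isUnit_det] at hL
  let P : (Matrix (m ⊕ n) (m ⊕ n) R)ˣ :=
    ⟨fromBlocks 1 0 0 L, fromBlocks 1 0 0 L⁻¹, by simp [fromBlocks_multiply, mul_nonsing_inv L hL],
      by simp [fromBlocks_multiply, nonsing_inv_mul L hL]⟩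
  have hP : fromBlocks A (B * L⁻¹) (L * C) (L * D * L⁻¹) =
      P.val * fromBlocks A B C D * P⁻¹.val := by
    simp [P, fromBlocks_multiply, Matrix.mul_assoc]
  rw [hP, Units.conj_pow, ← fromBlocks_toBlocks (fromBlocks A B C D ^ k)]
  simp [P, fromBlocks_multiply]

end Powers

noncomputable def isospectralReduction [CommRing R] (H : Matrix (m ⊕ n) (m ⊕ n) R) (ω : R) :
    Matrix n n R :=
  H.toBlocks₂₂ - H.toBlocks₂₁ * (H.toBlocks₁₁ - ω • 1)⁻¹ * H.toBlocks₁₂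

lemma isospectralReduction_fromBlocks_conj [CommRing R] [Fintype n] [DecidableEq n]
    (A : Matrix m m R) (B : Matrix m n R) (C : Matrix n m R) (D L : Matrix n n R) (ω : R) :
    isospectralReduction (fromBlocks A (B * L⁻¹) (L * C) (L * D * L⁻¹)) ω
      = L * isospectralReduction (fromBlocks A B C D) ω * L⁻¹ := by
  simp only [isospectralReduction, toBlocks_fromBlocks₁₁, toBlocks_fromBlocks₁₂,
    toBlocks_fromBlocks₂₁, toBlocks_fromBlocks₂₂, Matrix.mul_sub, Matrix.sub_mul, Matrix.mul_assoc]

variable {𝕜 : Type*} [RCLike 𝕜]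

lemma isospectralReduction_conjTranspose (H : Matrix (m ⊕ n) (m ⊕ n) 𝕜) (ω : 𝕜) :
    isospectralReduction Hᴴ ω = (isospectralReduction H (starRingEnd 𝕜 ω))ᴴ := by
  simp only [isospectralReduction, conjTranspose_sub, conjTranspose_mul, conjTranspose_nonsing_inv,
    conjTranspose_smul, conjTranspose_one, RCLike.star_def, RCLike.conj_conj, Matrix.mul_assoc]
  rfl

open scoped Matrix.Norms.L2Operator

lemma notMem_spectrum_of_norm_lt {A : Matrix m m 𝕜} {ω : 𝕜} (h : ‖A‖ < ‖ω‖) :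
    ω ∉ spectrum 𝕜 A := by
  have h_one : ‖(1 : Matrix m m 𝕜)‖ ≤ 1 := by
    rw [cstar_norm_def, map_one]
    exact ContinuousLinearMap.norm_id_le
  exact fun hω ↦ (spectrum.norm_le_norm_mul_of_mem hω).not_gt
    ((mul_le_of_le_one_right (norm_nonneg A) h_one).trans_lt h)

lemma hasSum_neg_inv_sub_smul_one {A : Matrix m m 𝕜} {ω : 𝕜} (h : ‖A‖ < ‖ω‖) :
    HasSum (fun k ↦ ω⁻¹ ^ (k + 1) • A ^ k) (-(A - ω • 1)⁻¹) := by
  have hω : ω ≠ 0 := norm_pos_iff.mp ((norm_nonneg A).trans_lt h)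
  have hx : ‖ω⁻¹ • A‖ < 1 := by
    rwa [norm_smul, norm_inv, inv_mul_lt_one₀ ((norm_nonneg A).trans_lt h)]
  have hinv : (A - ω • 1) * -(ω⁻¹ • Ring.inverse (1 - ω⁻¹ • A)) = 1 := by
    have hA : A - ω • 1 = -(ω • (1 - ω⁻¹ • A)) := by
      rw [smul_sub, smul_smul, mul_inv_cancel₀ hω, one_smul]; abel
    rw [hA, neg_mul_neg, smul_mul_smul_comm, mul_inv_cancel₀ hω, one_smul,
      Ring.mul_inverse_cancel _ (isUnit_one_sub_of_norm_lt_one hx)]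
  rw [inv_eq_right_inv hinv, neg_neg]
  simpa only [smul_pow, smul_smul, ← pow_succ'] using
    (hasSum_geom_series_inverse _ hx).const_smul ω⁻¹

lemma hasSum_isospectralReduction (H : Matrix (m ⊕ n) (m ⊕ n) 𝕜) {ω : 𝕜}
    (h : ‖H.toBlocks₁₁‖ < ‖ω‖) :
    HasSum (fun k ↦ ω⁻¹ ^ k • markovParam H k) (isospectralReduction H ω) := by
  rw [← hasSum_nat_add_iff' 1]
  have hmap := ((hasSum_neg_inv_sub_smul_one h).map (addMonoidHomMulLeft H.toBlocks₂₁)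
    (continuous_const.matrix_mul continuous_id)).map (addMonoidHomMulRight H.toBlocks₁₂)
    (continuous_id.matrix_mul continuous_const)
  simpa [markovParam, isospectralReduction, Function.comp_def, Matrix.mul_assoc, sub_eq_add_neg]
    using hmap

theorem markovParam_eq_iff_isospectralReduction_eq [Fintype n] [DecidableEq n]
    [Fintype m'] [DecidableEq m']
    (H : Matrix (m ⊕ n) (m ⊕ n) 𝕜) (H' : Matrix (m' ⊕ n) (m' ⊕ n) 𝕜) {r : ℝ}
    (hH : ‖H.toBlocks₁₁‖ ≤ r) (hH' : ‖H'.toBlocks₁₁‖ ≤ r) :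
    markovParam H = markovParam H' ↔
      ∀ ω : 𝕜, r < ‖ω‖ → isospectralReduction H ω = isospectralReduction H' ω := by
  constructor
  · intro h ω hω
    exact (hasSum_isospectralReduction H (hH.trans_lt hω)).unique
      (h ▸ hasSum_isospectralReduction H' (hH'.trans_lt hω))
  · intro h
    rw [← sub_eq_zero]
    refine eq_zero_of_eventually_hasSum_zero (𝕜 := 𝕜) ?_
    filter_upwards [tendsto_norm_inv_nhdsNE_zero_atTop.eventually_gt_atTop r] with z hz
    simpa [h z⁻¹ hz, smul_sub] using (hasSum_isospectralReduction H (hH.trans_lt hz)).sub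
      (hasSum_isospectralReduction H' (hH'.trans_lt hz))

end Matrix

/-- Theorem 2 (alternative expression of non-Hermitian latent symmetry):
the latent symmetry `L (H^n)_SS L⁻¹ = ((H^n)_SS)†` for all n holds iff the
isospectral reduction satisfies `L R_S(H,ω) L⁻¹ = R_S(H,ω*)†` for all ω outside
the spectrum of H_S̄S̄ with |ω| larger than the (ℓ²) operator norm of H_S̄S̄. -/
theorem latent_symmetry_iff_isospectral_symmetry (p q : ℕ)
    (A : Matrix (Fin p) (Fin p) ℂ) (B : Matrix (Fin p) (Fin q) ℂ)
    (C : Matrix (Fin q) (Fin p) ℂ) (D : Matrix (Fin q) (Fin q) ℂ)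
    (L : Matrix (Fin q) (Fin q) ℂ) (hL : IsUnit L) :
    (∀ n : ℕ, L * ((Matrix.fromBlocks A B C D) ^ n).toBlocks₂₂ * L⁻¹
        = (((Matrix.fromBlocks A B C D) ^ n).toBlocks₂₂)ᴴ)
      ↔ (∀ ω : ℂ, ω ∉ spectrum ℂ A →
          ‖Matrix.toEuclideanCLM (𝕜 := ℂ) A‖ < ‖ω‖ →
          L * (D - C * (A - ω • 1)⁻¹ * B) * L⁻¹
            = (D - C * (A - (starRingEnd ℂ ω) • 1)⁻¹ * B)ᴴ) := by
  open scoped Matrix.Norms.L2Operator in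
  calc _ ↔ ∀ n, (fromBlocks A (B * L⁻¹) (L * C) (L * D * L⁻¹) ^ n).toBlocks₂₂
          = ((fromBlocks A B C D)ᴴ ^ n).toBlocks₂₂ := by
        simp only [toBlocks₂₂_pow_fromBlocks_conj A B C D hL, ← conjTranspose_pow,
          toBlocks₂₂_conjTranspose]
    _ ↔ markovParam (fromBlocks A (B * L⁻¹) (L * C) (L * D * L⁻¹))
          = markovParam (fromBlocks A B C D)ᴴ := toBlocks₂₂_pow_eq_iff_markovParam_eq _ _
    _ ↔ ∀ ω : ℂ, ‖A‖ < ‖ω‖ →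
          isospectralReduction (fromBlocks A (B * L⁻¹) (L * C) (L * D * L⁻¹)) ω
            = isospectralReduction (fromBlocks A B C D)ᴴ ω :=
        markovParam_eq_iff_isospectralReduction_eq _ _ (by simp)
          (by simp [fromBlocks_conjTranspose, l2_opNorm_conjTranspose])
    _ ↔ _ := by
        refine forall_congr' fun ω ↦ ?_
        rw [isospectralReduction_fromBlocks_conj, isospectralReduction_conjTranspose,
          ← cstar_norm_def]
        simp only [isospectralReduction, toBlocks_fromBlocks₁₁, toBlocks_fromBlocks₁₂,
          toBlocks_fromBlocks₂₁, toBlocks_fromBlocks₂₂]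
        exact ⟨fun h _ ↦ h, fun h hω ↦ h (notMem_spectrum_of_norm_lt hω) hω⟩
end

section
/- Consider the 2×2 quadratic matrix polynomial Q(ω; γ, χ, κ) = ω²M − K + iωΓ with M = m₀I, Γ = (γ/2)σ_z, and K = [[κ̄ + κ/2 + χ, −χ], [−χ − δχ, κ̄ − κ/2 + χ]], where m₀, κ̄, δχ, γ, χ, κ are real and σ_z = diag(1,−1), σ_x = [[0,1],[1,0]]. Then Q satisfies the κ-symmetry σ_x Q(ω; γ, χ, κ)† σ_x = Q(ω*; γ, χ, −κ). Consequently, for κ = 0 the eigenvalue set of Q is invariant under complex conjugation ω ↦ ω*. -/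
set_option maxRecDepth 8000

open Matrix Complex

/-- The quadratic matrix polynomial of the theoretical two-oscillator model:
Q(ω; γ, χ, κ) = ω²M − K + iωΓ with M = m₀I, Γ = (γ/2)σ_z and the stated K. -/
noncomputable def Qth (m₀ κb δχ : ℝ) (γ χ κ : ℝ) (ω : ℂ) : Matrix (Fin 2) (Fin 2) ℂ :=
  ω ^ 2 • ((m₀ : ℂ) • (1 : Matrix (Fin 2) (Fin 2) ℂ))
    - !![((κb : ℂ) + (κ : ℂ) / 2 + (χ : ℂ)), -(χ : ℂ);
         (-(χ : ℂ) - (δχ : ℂ)), ((κb : ℂ) - (κ : ℂ) / 2 + (χ : ℂ))]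
    + (Complex.I * ω) • (((γ : ℂ) / 2) • !![(1 : ℂ), 0; 0, -1])

lemma Qth_eq (m₀ κb δχ γ χ κ : ℝ) (ω : ℂ) :
    Qth m₀ κb δχ γ χ κ ω =
      !![ω ^ 2 * m₀ - ((κb : ℂ) + κ / 2 + χ) + Complex.I * ω * (γ / 2), (χ : ℂ);
         (χ : ℂ) + δχ, ω ^ 2 * m₀ - ((κb : ℂ) - κ / 2 + χ) - Complex.I * ω * (γ / 2)] := by
  ext i j
  fin_cases i <;> fin_cases j <;>
    simp [Qth, Matrix.one_apply, smul_eq_mul] <;> ring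

lemma sand (A : Matrix (Fin 2) (Fin 2) ℂ) :
    !![(0 : ℂ), 1; 1, 0] * Aᴴ * !![(0 : ℂ), 1; 1, 0]
      = !![star (A 1 1), star (A 0 1); star (A 1 0), star (A 0 0)] := by
  ext i j
  fin_cases i <;> fin_cases j <;>
    simp [Matrix.mul_apply, Matrix.vecMul, dotProduct, Fin.sum_univ_two,
      Matrix.conjTranspose_apply]

/-- The κ-symmetry σ_x Q(ω; γ, χ, κ)† σ_x = Q(ω*; γ, χ, −κ) of the theoretical
model, and the consequent invariance of the κ = 0 eigenvalue set under ω ↦ ω*. -/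
theorem kappa_symmetry (m₀ κb δχ γ χ κ : ℝ) :
    (∀ ω : ℂ, !![(0 : ℂ), 1; 1, 0] * (Qth m₀ κb δχ γ χ κ ω)ᴴ * !![(0 : ℂ), 1; 1, 0]
        = Qth m₀ κb δχ γ χ (-κ) (starRingEnd ℂ ω))
      ∧ (∀ ω : ℂ, (Qth m₀ κb δχ γ χ 0 ω).det = 0 ↔
          (Qth m₀ κb δχ γ χ 0 (starRingEnd ℂ ω)).det = 0) := by
  have key : ∀ (κ : ℝ) (ω : ℂ), !![(0 : ℂ), 1; 1, 0] * (Qth m₀ κb δχ γ χ κ ω)ᴴ * !![(0 : ℂ), 1; 1, 0]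
      = Qth m₀ κb δχ γ χ (-κ) (starRingEnd ℂ ω) := by
    intro κ ω
    rw [sand, Qth_eq, Qth_eq]
    ext i j
    fin_cases i <;> fin_cases j <;>
      simp [Complex.star_def, Complex.conj_ofReal, Complex.conj_I] <;>
      push_cast <;> ring
  refine ⟨key κ, fun ω => ?_⟩
  have h := key 0 ω
  rw [neg_zero] at h
  have hσ : (!![(0 : ℂ), 1; 1, 0]).det = -1 := by simp [Matrix.det_fin_two]
  have hdet : (Qth m₀ κb δχ γ χ 0 (starRingEnd ℂ ω)).det
      = starRingEnd ℂ (Qth m₀ κb δχ γ χ 0 ω).det := by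
    rw [← h, Matrix.det_mul, Matrix.det_mul, Matrix.det_conjTranspose, hσ,
      Complex.star_def]
    ring
  rw [hdet]
  exact ⟨fun h0 => by simp [h0], fun h0 => (starRingEnd ℂ).injective (by simpa using h0)⟩
end

section
/- Let U be a unitary N×N matrix and Q(ω) a quadratic matrix polynomial with invertible leading coefficient M, Q(ω) = ω²M − K + iωΓ, and let H = i[[0, I], [−M⁻¹K, −M⁻¹Γ]] be the linearized 2N×2N Hamiltonian. If U Q(ω*)* U⁻¹ = Q(ω) for all ω (as an identity of matrix polynomials, i.e., U M* U⁻¹ = M, U K* U⁻¹ = K, U Γ* U⁻¹ = Γ with appropriate conjugations), then (τ_z ⊗ U) H* (τ_z ⊗ U)⁻¹ = H, where τ_z ⊗ U = diag(U, −U). -/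
/-!
Write `SemiconjBy U X̄ X` (that is, `U X̄ = X U`) for the antiunitary symmetry acting on a single
matrix `X`. Comparing the coefficients of `ω²`, `ω` and `1` in the symmetry of the pencil gives it
for `M` and `K`, and for `Γ` with a sign, since conjugation sends the coefficient `i` of `ω Γ` to
`-i`. The relation is multiplicative and passes to inverses, so it holds for `M⁻¹K` and, with a
sign, for `M⁻¹Γ`. Conjugation by `diag(U, -U)` flips the sign of the off-diagonal blocks, so
`diag(U, -U)` intertwines the conjugate of `-iH = [[0, 1], [-M⁻¹K, -M⁻¹Γ]]` with its negative; the
factor `conj i = -i` undoes that sign.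
-/

open Matrix Complex

theorem eq_zero_of_forall_sq_smul_add_smul_add_eq_zero {𝕜 V : Type*} [Field 𝕜] [AddCommGroup V]
    [Module 𝕜 V] (h2 : (2 : 𝕜) ≠ 0) {a b c : V} (h : ∀ t : 𝕜, t ^ 2 • a + t • b + c = 0) :
    a = 0 ∧ b = 0 ∧ c = 0 := by
  have hc : c = 0 := by simpa using h 0
  have h1 := h 1
  have hm1 := h (-1)
  simp only [one_pow, one_smul, hc, add_zero, even_two, Even.neg_pow, neg_smul] at h1 hm1
  have ha : (2 : 𝕜) • a = 0 := by rw [two_smul]; linear_combination (norm := module) h1 + hm1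
  have hb : (2 : 𝕜) • b = 0 := by rw [two_smul]; linear_combination (norm := module) h1 - hm1
  exact ⟨(smul_eq_zero.1 ha).resolve_left h2, (smul_eq_zero.1 hb).resolve_left h2, hc⟩

theorem semiconjBy_of_forall_semiconjBy_quadratic {𝕜 A : Type*} [Field 𝕜] [Ring A] [Algebra 𝕜 A]
    (h2 : (2 : 𝕜) ≠ 0) {u x₂ x₁ x₀ y₂ y₁ y₀ : A}
    (h : ∀ t : 𝕜, SemiconjBy u (t ^ 2 • x₂ + t • x₁ + x₀) (t ^ 2 • y₂ + t • y₁ + y₀)) :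
    SemiconjBy u x₂ y₂ ∧ SemiconjBy u x₁ y₁ ∧ SemiconjBy u x₀ y₀ := by
  simp only [SemiconjBy, ← sub_eq_zero (a := u * _)]
  refine eq_zero_of_forall_sq_smul_add_smul_add_eq_zero h2 fun t => ?_
  rw [← sub_eq_zero.2 (h t)]
  simp only [mul_add, add_mul, mul_smul_comm, smul_mul_assoc]
  module

section MatrixMap

variable {n R S : Type*} [Fintype n] [DecidableEq n] [CommRing R] [CommRing S]

theorem Matrix.map_nonsing_inv (f : R →+* S) {A : Matrix n n R} (hA : IsUnit A.det) :
    A⁻¹.map f = (A.map f)⁻¹ :=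
  (inv_eq_left_inv <| by
    rw [← Matrix.map_mul, nonsing_inv_mul A hA, Matrix.map_one f f.map_zero f.map_one]).symm

theorem Matrix.isUnit_det_map (f : R →+* S) {A : Matrix n n R} (hA : IsUnit A.det) :
    IsUnit (A.map f).det := by
  rw [← RingHom.mapMatrix_apply, ← RingHom.map_det]
  exact hA.map f

end MatrixMap

section Semiconj

variable {n R : Type*} [Fintype n] [CommRing R]

theorem SemiconjBy.nonsing_inv [DecidableEq n] {U X Y : Matrix n n R} (h : SemiconjBy U X Y)
    (hX : IsUnit X.det) (hY : IsUnit Y.det) : SemiconjBy U X⁻¹ Y⁻¹ := by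
  calc U * X⁻¹ = Y⁻¹ * (Y * U) * X⁻¹ := by rw [nonsing_inv_mul_cancel_left _ _ hY]
    _ = Y⁻¹ * U := by rw [← h.eq, Matrix.mul_assoc, mul_nonsing_inv_cancel_right _ _ hX]

theorem semiconjBy_fromBlocks_diag_neg {U A B C D A' B' C' D' : Matrix n n R}
    (hA : SemiconjBy U A A') (hB : SemiconjBy U (-B) B') (hC : SemiconjBy U (-C) C')
    (hD : SemiconjBy U D D') :
    SemiconjBy (fromBlocks U 0 0 (-U)) (fromBlocks A B C D) (fromBlocks A' B' C' D') := by
  simp only [SemiconjBy, fromBlocks_multiply, Matrix.mul_zero, Matrix.zero_mul, add_zero, zero_add,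
    Matrix.neg_mul, Matrix.mul_neg]
  rw [hA.eq, hD.eq, ← hB.eq, ← hC.eq, Matrix.mul_neg, Matrix.mul_neg, neg_neg]

theorem semiconjBy_fromBlocks_companion [DecidableEq n] {U P Q P' Q' : Matrix n n R}
    (hP : SemiconjBy U P' P) (hQ : SemiconjBy U Q' (-Q)) :
    SemiconjBy (fromBlocks U 0 0 (-U)) (fromBlocks 0 1 (-P') (-Q'))
      (-fromBlocks 0 1 (-P) (-Q)) := by
  rw [fromBlocks_neg, neg_zero, neg_neg, neg_neg]
  exact semiconjBy_fromBlocks_diag_neg (.zero_right U) (.neg_one_right U) (by rwa [neg_neg])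
    (by simpa using hQ.neg_right)

end Semiconj

open ComplexConjugate

theorem semiconjBy_map_conj_of_pencil_symmetry {n : Type*} [Fintype n] [DecidableEq n]
    {M K Γ U : Matrix n n ℂ} (hU : IsUnit U.det)
    (hQ : ∀ ω : ℂ, U * (((conj ω) ^ 2 • M - K + (I * conj ω) • Γ).map conj) * U⁻¹
      = ω ^ 2 • M - K + (I * ω) • Γ) :
    SemiconjBy U (M.map conj) M ∧ SemiconjBy U (K.map conj) K ∧
      SemiconjBy U (Γ.map conj) (-Γ) := by
  have hcoeff : ∀ ω : ℂ, SemiconjBy U (ω ^ 2 • M.map conj + ω • I • -Γ.map conj + -K.map conj)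
      (ω ^ 2 • M + ω • I • Γ + -K) := by
    intro ω
    have hmap : ((conj ω) ^ 2 • M - K + (I * conj ω) • Γ).map conj
        = ω ^ 2 • M.map conj + ω • I • -Γ.map conj + -K.map conj := by
      ext i j
      simp only [map_apply, Matrix.add_apply, Matrix.sub_apply, Matrix.smul_apply, Matrix.neg_apply,
        smul_eq_mul, smul_neg, map_add, map_sub, map_mul, map_pow, conj_conj, conj_I, neg_mul]
      ring
    have hpencil : ω ^ 2 • M - K + (I * ω) • Γ = ω ^ 2 • M + ω • I • Γ + -K := by module
    rw [SemiconjBy, ← hmap, ← hpencil, ← hQ ω, nonsing_inv_mul_cancel_right _ _ hU]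
  obtain ⟨hM, hΓ, hK⟩ := semiconjBy_of_forall_semiconjBy_quadratic two_ne_zero hcoeff
  refine ⟨hM, SemiconjBy.neg_right_iff.1 hK, ?_⟩
  simpa using ((SemiconjBy.smul_right_iff₀ I_ne_zero).1 hΓ).neg_right

/-- If the quadratic pencil Q(ω) = ω²M − K + iωΓ has the antiunitary symmetry
U Q(ω*)* U⁻¹ = Q(ω) (U unitary), then the linearized Hamiltonian
H = i[[0, 1], [−M⁻¹K, −M⁻¹Γ]] satisfies (τ_z ⊗ U) H* (τ_z ⊗ U)⁻¹ = H. -/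
theorem antiunitary_symmetry_linearization (N : ℕ)
    (M K Γ U : Matrix (Fin N) (Fin N) ℂ)
    (hM : IsUnit M.det)
    (hU : U ∈ unitary (Matrix (Fin N) (Fin N) ℂ))
    (hQ : ∀ ω : ℂ,
      U * (((starRingEnd ℂ ω) ^ 2 • M - K + (Complex.I * (starRingEnd ℂ ω)) • Γ).map
            (starRingEnd ℂ)) * U⁻¹
        = ω ^ 2 • M - K + (Complex.I * ω) • Γ) :
    (Matrix.fromBlocks U 0 0 (-U))
        * ((Complex.I • Matrix.fromBlocks 0 1 (-(M⁻¹ * K)) (-(M⁻¹ * Γ))).map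
            (starRingEnd ℂ))
        * (Matrix.fromBlocks U 0 0 (-U))⁻¹
      = Complex.I • Matrix.fromBlocks 0 1 (-(M⁻¹ * K)) (-(M⁻¹ * Γ)) := by
  have hUunit : IsUnit U := Unitary.isUnit_coe (U := ⟨U, hU⟩)
  have hUdet : IsUnit U.det := (isUnit_iff_isUnit_det U).1 hUunit
  obtain ⟨hMc, hKc, hΓc⟩ := semiconjBy_map_conj_of_pencil_symmetry hUdet hQ
  have hMinv : SemiconjBy U (M⁻¹.map conj) M⁻¹ := by
    rw [map_nonsing_inv _ hM]
    exact hMc.nonsing_inv (isUnit_det_map _ hM) hM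
  have hT : IsUnit (fromBlocks U 0 0 (-U)).det :=
    (isUnit_iff_isUnit_det _).1 (isUnit_fromBlocks_zero₂₁.2 ⟨hUunit, hUunit.neg⟩)
  have hH : SemiconjBy (fromBlocks U 0 0 (-U))
      ((I • fromBlocks 0 1 (-(M⁻¹ * K)) (-(M⁻¹ * Γ))).map conj)
      (I • fromBlocks 0 1 (-(M⁻¹ * K)) (-(M⁻¹ * Γ))) := by
    convert (semiconjBy_fromBlocks_companion (hMinv.mul_right hKc)
      (by simpa using hMinv.mul_right hΓc)).smul_right (-I) using 1
    · rw [Matrix.map_smul' _ _ _ (map_mul _), conj_I, fromBlocks_map,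
        Matrix.map_zero _ (map_zero _), Matrix.map_one _ (map_zero _) (map_one _),
        Matrix.map_neg _ (map_neg _), Matrix.map_neg _ (map_neg _), Matrix.map_mul, Matrix.map_mul]
    · rw [smul_neg, neg_smul, neg_neg]
  rw [hH.eq, mul_nonsing_inv_cancel_right _ _ hT]
end
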